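/- If φ ∈ L^∞(𝕋) and T^α_φ is left invertible for every α ∈ 𝔹², then there exists ε ∈ (0,1] such that ‖T^α_φ f‖ ≥ ε‖f‖ for every α ∈ 𝔹² and every f ∈ H²_α (i.e. the lower bounds can be chosen uniformly in α). -/

import Mathlib

open MeasureTheory Complex AddCircle
open scoped ENNReal

noncomputable section

instance fact_two_pi_pos : Fact (0 < 2 * Real.pi) := ⟨by positivity⟩

/-- The unit circle `𝕋`, realized as `ℝ / 2πℤ`. -/
abbrev CircleT : Type := AddCircle (2 * Real.pi)

/-- Normalized arc-length measure `dt/2π` on the circle. -/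
abbrev hm : Measure CircleT := haarAddCircle

/-- The `n`-th Fourier coefficient of an `L²` function on the circle. -/
def hat2 (f : Lp ℂ 2 hm) (n : ℤ) : ℂ := fourierBasis.repr f n

lemma hat2_eq_inner (f : Lp ℂ 2 hm) (n : ℤ) :
    hat2 f n = @inner ℂ _ _ ((fourierBasis (T := 2 * Real.pi)) n) f :=
  fourierBasis.repr_apply_apply f n

lemma continuous_hat2 (n : ℤ) : Continuous fun f : Lp ℂ 2 hm => hat2 f n := by
  simp only [hat2_eq_inner]
  exact continuous_const.inner continuous_id

@[simp] lemma hat2_add (f g : Lp ℂ 2 hm) (n : ℤ) :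
    hat2 (f + g) n = hat2 f n + hat2 g n := by
  simp [hat2, map_add]

@[simp] lemma hat2_smul (c : ℂ) (f : Lp ℂ 2 hm) (n : ℤ) :
    hat2 (c • f) n = c * hat2 f n := by
  simp [hat2, _root_.map_smul]

@[simp] lemma hat2_zero (n : ℤ) : hat2 0 n = 0 := by simp [hat2]

/-- The Hardy space `H² ⊂ L²`: vanishing negative Fourier coefficients. -/
def Hardy2 : Submodule ℂ (Lp ℂ 2 hm) where
  carrier := {f | ∀ n : ℤ, n < 0 → hat2 f n = 0}
  add_mem' := fun hf hg n hn => by simp [hf n hn, hg n hn]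
  zero_mem' := fun n _ => hat2_zero n
  smul_mem' := fun c f hf n hn => by simp [hf n hn]

/-- The subspace `z²H² ⊂ H²`: Fourier coefficients vanish below index 2. -/
def Hardy20 : Submodule ℂ (Lp ℂ 2 hm) where
  carrier := {f | ∀ n : ℤ, n < 2 → hat2 f n = 0}
  add_mem' := fun hf hg n hn => by simp [hf n hn, hg n hn]
  zero_mem' := fun n _ => hat2_zero n
  smul_mem' := fun c f hf n hn => by simp [hf n hn]

/-- The unit sphere `𝔹² = {(a,b) ∈ ℂ² : |a|² + |b|² = 1}`. -/
def B2 : Set (ℂ × ℂ) := {α | ‖α.1‖ ^ 2 + ‖α.2‖ ^ 2 = 1}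

/-- The space `H²_α = {f ∈ H² : b·f(0) = a·f'(0)}` for `α = (a,b)`; here `f(0) = f̂(0)` and
`f'(0) = f̂(1)`. -/
def HardyA (α : ℂ × ℂ) : Submodule ℂ (Lp ℂ 2 hm) where
  carrier := {f | (∀ n : ℤ, n < 0 → hat2 f n = 0) ∧ α.2 * hat2 f 0 = α.1 * hat2 f 1}
  add_mem' := fun hf hg =>
    ⟨fun n hn => by simp [hf.1 n hn, hg.1 n hn],
     by simp only [hat2_add, mul_add, hf.2, hg.2]⟩
  zero_mem' := ⟨fun n _ => hat2_zero n, by simp⟩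
  smul_mem' := fun c f hf =>
    ⟨fun n hn => by simp [hf.1 n hn],
     by simp only [hat2_smul, mul_left_comm, hf.2]⟩

lemma isClosed_vanishing (s : Set ℤ) :
    IsClosed {f : Lp ℂ 2 hm | ∀ n ∈ s, hat2 f n = 0} := by
  have : {f : Lp ℂ 2 hm | ∀ n ∈ s, hat2 f n = 0}
      = ⋂ (n : ℤ) (_ : n ∈ s), {f | hat2 f n = 0} := by
    ext f; simp
  rw [this]
  exact isClosed_iInter fun n => isClosed_iInter fun _ =>
    isClosed_eq (continuous_hat2 n) continuous_const

lemma isClosed_Hardy2 : IsClosed (Hardy2 : Set (Lp ℂ 2 hm)) := by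
  have := isClosed_vanishing {n : ℤ | n < 0}
  simpa [Hardy2] using this

lemma isClosed_Hardy20 : IsClosed (Hardy20 : Set (Lp ℂ 2 hm)) := by
  have := isClosed_vanishing {n : ℤ | n < 2}
  simpa [Hardy20] using this

lemma isClosed_HardyA (α : ℂ × ℂ) : IsClosed (HardyA α : Set (Lp ℂ 2 hm)) := by
  have h1 := isClosed_vanishing {n : ℤ | n < 0}
  have h2 : IsClosed {f : Lp ℂ 2 hm | α.2 * hat2 f 0 = α.1 * hat2 f 1} :=
    isClosed_eq (continuous_const.mul (continuous_hat2 0))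
      (continuous_const.mul (continuous_hat2 1))
  have : (HardyA α : Set (Lp ℂ 2 hm))
      = {f : Lp ℂ 2 hm | ∀ n ∈ {n : ℤ | n < 0}, hat2 f n = 0}
        ∩ {f : Lp ℂ 2 hm | α.2 * hat2 f 0 = α.1 * hat2 f 1} := by
    ext f; simp [HardyA, Set.mem_setOf_eq]
  rw [this]
  exact h1.inter h2

instance : CompleteSpace Hardy2 := isClosed_Hardy2.completeSpace_coe
instance : CompleteSpace Hardy20 := isClosed_Hardy20.completeSpace_coe
instance (α : ℂ × ℂ) : CompleteSpace (HardyA α) := (isClosed_HardyA α).completeSpace_coe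

/-- Multiplication of an `L²` function by an `L^∞` function, as an element of `L²`. -/
def mulFun (φ : Lp ℂ ∞ hm) (f : Lp ℂ 2 hm) : Lp ℂ 2 hm :=
  ((Lp.memLp f).smul (r := 2) (Lp.memLp φ)).toLp (⇑φ • ⇑f)

lemma coeFn_mulFun (φ : Lp ℂ ∞ hm) (f : Lp ℂ 2 hm) :
    mulFun φ f =ᵐ[hm] fun t => φ t * f t := by
  filter_upwards [MemLp.coeFn_toLp ((Lp.memLp f).smul (r := 2) (Lp.memLp φ))] with t ht
  simpa [mulFun, Pi.smul_apply', smul_eq_mul] using ht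
lemma mulFun_add' (φ : Lp ℂ ∞ hm) (f g : Lp ℂ 2 hm) :
    mulFun φ (f + g) = mulFun φ f + mulFun φ g := by
  apply Lp.ext
  filter_upwards [coeFn_mulFun φ (f + g), coeFn_mulFun φ f, coeFn_mulFun φ g,
    Lp.coeFn_add f g, Lp.coeFn_add (mulFun φ f) (mulFun φ g)] with t h1 h2 h3 h4 h5
  simp only [h5, Pi.add_apply, h1, h2, h3, h4]
  ring

lemma mulFun_smul' (φ : Lp ℂ ∞ hm) (c : ℂ) (f : Lp ℂ 2 hm) :
    mulFun φ (c • f) = c • mulFun φ f := by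
  apply Lp.ext
  filter_upwards [coeFn_mulFun φ (c • f), coeFn_mulFun φ f,
    Lp.coeFn_smul c f, Lp.coeFn_smul c (mulFun φ f)] with t h1 h2 h3 h4
  simp only [h4, Pi.smul_apply, h1, h2, h3, smul_eq_mul]
  ring

lemma norm_mulFun_le (φ : Lp ℂ ∞ hm) (f : Lp ℂ 2 hm) : ‖mulFun φ f‖ ≤ ‖φ‖ * ‖f‖ := by
  rw [mulFun, Lp.norm_toLp]
  have h := eLpNorm_smul_le_eLpNorm_top_mul_eLpNorm (μ := hm) 2 (Lp.aestronglyMeasurable f) ⇑φ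
  calc (eLpNorm (⇑φ • ⇑f) 2 hm).toReal
      ≤ ((eLpNorm (⇑φ) ∞ hm) * eLpNorm (⇑f) 2 hm).toReal := by
        apply ENNReal.toReal_mono _ h
        exact ENNReal.mul_ne_top (Lp.eLpNorm_ne_top φ) (Lp.eLpNorm_ne_top f)
    _ = ‖φ‖ * ‖f‖ := by rw [ENNReal.toReal_mul, Lp.norm_def, Lp.norm_def]

/-- Multiplication by an `L^∞` function, as a bounded operator on `L²`. -/
def mul2 (φ : Lp ℂ ∞ hm) : Lp ℂ 2 hm →L[ℂ] Lp ℂ 2 hm :=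
  LinearMap.mkContinuous
    { toFun := mulFun φ
      map_add' := mulFun_add' φ
      map_smul' := mulFun_smul' φ }
    ‖φ‖ (norm_mulFun_le φ)

lemma coeFn_mul2 (φ : Lp ℂ ∞ hm) (f : Lp ℂ 2 hm) :
    mul2 φ f =ᵐ[hm] fun t => φ t * f t := coeFn_mulFun φ f

/-- The Toeplitz operator `T^α_φ = V_α^* M_φ V_α` on `H²_α`. -/
def Toeplitz (α : ℂ × ℂ) (φ : Lp ℂ ∞ hm) : HardyA α →L[ℂ] HardyA α :=
  (HardyA α).orthogonalProjectionOnto ∘L (mul2 φ) ∘L (HardyA α).subtypeL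

/-- The classical Toeplitz operator `T_φ = V^* M_φ V` on `H²`. -/
def ToeplitzH (φ : Lp ℂ ∞ hm) : Hardy2 →L[ℂ] Hardy2 :=
  Hardy2.orthogonalProjectionOnto ∘L (mul2 φ) ∘L Hardy2.subtypeL

/-- The compression `W^* M_φ W` of multiplication by `φ` to `z²H²`. -/
def Toeplitz20 (φ : Lp ℂ ∞ hm) : Hardy20 →L[ℂ] Hardy20 :=
  Hardy20.orthogonalProjectionOnto ∘L (mul2 φ) ∘L Hardy20.subtypeL

/-- The `n`-th Fourier coefficient of an `L^∞` function on the circle. -/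
def hatInf (φ : Lp ℂ ∞ hm) (n : ℤ) : ℂ := fourierCoeff (⇑φ) n

/-- The Neil algebra `𝔄`, viewed inside `L^∞` via boundary values: the (boundary values of)
bounded analytic functions on the disc whose derivative vanishes at `0`; equivalently, those
`φ ∈ L^∞` whose Fourier coefficients vanish at all negative indices and at index `1`. -/
def NeilSet : Set (Lp ℂ ∞ hm) := {φ | (∀ n : ℤ, n < 0 → hatInf φ n = 0) ∧ hatInf φ 1 = 0}

/-- `𝔄₀ = z²H^∞`, the functions in the Neil algebra vanishing at `0`. -/
def NeilSet0 : Set (Lp ℂ ∞ hm) := {φ | ∀ n : ℤ, n < 2 → hatInf φ n = 0}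

/-- `H^∞`, viewed inside `L^∞` via boundary values. -/
def HinfSet : Set (Lp ℂ ∞ hm) := {φ | ∀ n : ℤ, n < 0 → hatInf φ n = 0}

/-- `φ ∈ L^∞` is unimodular if `|φ| = 1` a.e. -/
def Unimodular (φ : Lp ℂ ∞ hm) : Prop := ∀ᵐ t ∂hm, ‖φ t‖ = 1

/-- The product of two `L^∞` functions. -/
def mulInf (φ ψ : Lp ℂ ∞ hm) : Lp ℂ ∞ hm :=
  ((Lp.memLp ψ).smul (r := ∞) (Lp.memLp φ)).toLp (⇑φ • ⇑ψ)

lemma coeFn_mulInf (φ ψ : Lp ℂ ∞ hm) :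
    mulInf φ ψ =ᵐ[hm] fun t => φ t * ψ t := by
  filter_upwards [MemLp.coeFn_toLp ((Lp.memLp ψ).smul (r := ∞) (Lp.memLp φ))] with t ht
  simpa [mulInf, Pi.smul_apply', smul_eq_mul] using ht

/-- The complex conjugate of an `L^∞` function. -/
def conjInf (φ : Lp ℂ ∞ hm) : Lp ℂ ∞ hm :=
  (MemLp.of_le (Lp.memLp φ)
      (Complex.continuous_conj.comp_aestronglyMeasurable (Lp.aestronglyMeasurable φ))
      (Filter.Eventually.of_forall fun t => by simp)).toLp
    fun t => (starRingEnd ℂ) (φ t)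

lemma coeFn_conjInf (φ : Lp ℂ ∞ hm) :
    conjInf φ =ᵐ[hm] fun t => (starRingEnd ℂ) (φ t) :=
  MemLp.coeFn_toLp _

/-- A bounded operator is left invertible if it has a bounded left inverse. -/
def LeftInvertible {E F : Type*} [NormedAddCommGroup E] [NormedAddCommGroup F]
    [NormedSpace ℂ E] [NormedSpace ℂ F] (T : E →L[ℂ] F) : Prop :=
  ∃ S : F →L[ℂ] E, S ∘L T = ContinuousLinearMap.id ℂ E

/-- A bounded operator on a space is invertible if it has a bounded two-sided inverse. -/
def InvertibleOp {E : Type*} [NormedAddCommGroup E] [NormedSpace ℂ E] (T : E →L[ℂ] E) : Prop :=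
  ∃ S : E →L[ℂ] E, S ∘L T = ContinuousLinearMap.id ℂ E ∧ T ∘L S = ContinuousLinearMap.id ℂ E

/-- The value at `w` in the unit disc of the analytic extension of (an `L²` function in) a Hardy
space, via its Taylor coefficients. -/
def eval2 (f : Lp ℂ 2 hm) (w : ℂ) : ℂ := ∑' n : ℕ, hat2 f n * w ^ n

/-- The value at `w` in the unit disc of the analytic extension of (an `L^∞` function in) `H^∞`,
via its Taylor coefficients. -/
def evalInf (φ : Lp ℂ ∞ hm) (w : ℂ) : ℂ := ∑' n : ℕ, hatInf φ n * w ^ n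

/-- `ψ` is invertible in the Neil algebra. -/
def NeilInvertible (ψ : Lp ℂ ∞ hm) : Prop :=
  ψ ∈ NeilSet ∧ ∃ χ ∈ NeilSet, mulInf ψ χ = Lp.const ∞ hm (1 : ℂ)

/-- The orthogonal projection of `L²` onto `H²_α`, as an operator on `L²`. -/
def projA (α : ℂ × ℂ) : Lp ℂ 2 hm →L[ℂ] Lp ℂ 2 hm :=
  (HardyA α).subtypeL ∘L (HardyA α).orthogonalProjectionOnto

/-- The subspace `𝓜 ⊂ L¹` of functions whose Fourier coefficients vanish at `0` and at all
indices `≤ -2`. -/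
def MM : Set (Lp ℂ 1 hm) :=
  {h | fourierCoeff (⇑h) 0 = 0 ∧ ∀ n : ℤ, n ≤ -2 → fourierCoeff (⇑h) n = 0}
/-- The complex conjugate of an `L²` function. -/
def conj2 (f : Lp ℂ 2 hm) : Lp ℂ 2 hm :=
  (MemLp.of_le (Lp.memLp f)
      (Complex.continuous_conj.comp_aestronglyMeasurable (Lp.aestronglyMeasurable f))
      (Filter.Eventually.of_forall fun t => by simp)).toLp
    fun t => (starRingEnd ℂ) (f t)

lemma coeFn_conj2 (f : Lp ℂ 2 hm) :
    conj2 f =ᵐ[hm] fun t => (starRingEnd ℂ) (f t) :=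
  MemLp.coeFn_toLp _

lemma fourierCoeff_hm_congr {f g : CircleT → ℂ} (h : f =ᵐ[hm] g) (n : ℤ) :
    fourierCoeff f n = fourierCoeff g n := by
  unfold fourierCoeff
  exact integral_congr_ae (by filter_upwards [h] with t ht; rw [ht])

lemma integrable_fourier_smul {f : CircleT → ℂ} (hf : Integrable f hm) (n : ℤ) :
    Integrable (fun t => (fourier n t : ℂ) • f t) hm := by
  simp_rw [smul_eq_mul]
  exact hf.bdd_mul ((fourier n).continuous.aestronglyMeasurable)
    (Filter.Eventually.of_forall fun t => le_of_eq (Circle.norm_coe _))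

lemma fourierCoeff_add_of_integrable {f g : CircleT → ℂ}
    (hf : Integrable f hm) (hg : Integrable g hm) (n : ℤ) :
    fourierCoeff (f + g) n = fourierCoeff f n + fourierCoeff g n := by
  unfold fourierCoeff
  rw [← integral_add (integrable_fourier_smul hf (-n)) (integrable_fourier_smul hg (-n))]
  exact integral_congr_ae (Filter.Eventually.of_forall fun t => by
    simp only [Pi.add_apply, smul_eq_mul]; ring)

lemma fourierCoeff_smul (c : ℂ) (f : CircleT → ℂ) (n : ℤ) :
    fourierCoeff (c • f) n = c * fourierCoeff f n := by
  unfold fourierCoeff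
  have : (∫ t : CircleT, (fourier (-n)) t • (c • f) t ∂hm)
      = ∫ t : CircleT, c • ((fourier (-n)) t • f t) ∂hm := by
    refine integral_congr_ae (Filter.Eventually.of_forall fun t => ?_)
    simp only [Pi.smul_apply, smul_eq_mul]; ring
  rw [this, integral_smul, smul_eq_mul]

/-- `𝓜`, as a subspace of `L¹`. -/
def MMsub : Submodule ℂ (Lp ℂ 1 hm) where
  carrier := MM
  add_mem' := by
    intro f g hf hg
    have key : ∀ n : ℤ, fourierCoeff (⇑(f + g)) n = fourierCoeff ⇑f n + fourierCoeff ⇑g n := by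
      intro n
      rw [fourierCoeff_hm_congr (Lp.coeFn_add f g) n]
      exact fourierCoeff_add_of_integrable (L1.integrable_coeFn f) (L1.integrable_coeFn g) n
    exact ⟨by rw [key 0, hf.1, hg.1, add_zero],
      fun n hn => by rw [key n, hf.2 n hn, hg.2 n hn, add_zero]⟩
  zero_mem' := by
    have key : ∀ n : ℤ, fourierCoeff (⇑(0 : Lp ℂ 1 hm)) n = 0 := by
      intro n
      rw [fourierCoeff_hm_congr (Lp.coeFn_zero ℂ 1 hm) n]
      simp [fourierCoeff]
    exact ⟨key 0, fun n _ => key n⟩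
  smul_mem' := by
    intro c f hf
    have key : ∀ n : ℤ, fourierCoeff (⇑(c • f)) n = c * fourierCoeff ⇑f n := by
      intro n
      rw [fourierCoeff_hm_congr (Lp.coeFn_smul c f) n, ← fourierCoeff_smul c ⇑f n]
    exact ⟨by rw [key 0, hf.1, mul_zero], fun n hn => by rw [key n, hf.2 n hn, mul_zero]⟩

lemma hatInf_add (φ ψ : Lp ℂ ∞ hm) (n : ℤ) :
    hatInf (φ + ψ) n = hatInf φ n + hatInf ψ n := by
  unfold hatInf
  rw [fourierCoeff_hm_congr (Lp.coeFn_add φ ψ) n]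
  exact fourierCoeff_add_of_integrable ((Lp.memLp φ).integrable le_top)
    ((Lp.memLp ψ).integrable le_top) n

lemma hatInf_smul (c : ℂ) (φ : Lp ℂ ∞ hm) (n : ℤ) :
    hatInf (c • φ) n = c * hatInf φ n := by
  unfold hatInf
  rw [fourierCoeff_hm_congr (Lp.coeFn_smul c φ) n, ← fourierCoeff_smul c ⇑φ n]

lemma hatInf_zero (n : ℤ) : hatInf (0 : Lp ℂ ∞ hm) n = 0 := by
  unfold hatInf
  rw [fourierCoeff_hm_congr (Lp.coeFn_zero ℂ ∞ hm) n]
  simp [fourierCoeff]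

/-- The Neil algebra `𝔄`, as a subspace of `L^∞`. -/
def NeilSub : Submodule ℂ (Lp ℂ ∞ hm) where
  carrier := NeilSet
  add_mem' := fun hf hg =>
    ⟨fun n hn => by rw [hatInf_add, hf.1 n hn, hg.1 n hn, add_zero],
      by rw [hatInf_add, hf.2, hg.2, add_zero]⟩
  zero_mem' := ⟨fun n _ => hatInf_zero n, hatInf_zero 1⟩
  smul_mem' := fun c φ hφ =>
    ⟨fun n hn => by rw [hatInf_smul, hφ.1 n hn, mul_zero],
      by rw [hatInf_smul, hφ.2, mul_zero]⟩

/-!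
Left invertibility gives each `T^α_φ` some lower bound `ε_α > 0`. Since `H²_α` is the orthogonal
sum of `z²H²` and `ℂ (a + b z)`, its orthogonal projection `P_α` is that of `z²H²` plus a rank-one
projection, so `α ↦ P_α` is continuous on `𝔹²`. A lower bound `ε` of the compression of `M_φ` to
`H²_α` survives on `H²_β` up to an error `‖P_α - P_β‖ (ε + 2‖M_φ‖)`, so `ε_α / 2` is a lower bound
on a neighbourhood of `α`, and compactness of `𝔹²` makes the bound uniform.
-/

open Filter Topology InnerProductSpace ComplexConjugate

lemma LeftInvertible.exists_pos_mul_norm_le {E F : Type*} [NormedAddCommGroup E]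
    [NormedAddCommGroup F] [NormedSpace ℂ E] [NormedSpace ℂ F] {T : E →L[ℂ] F}
    (hT : LeftInvertible T) : ∃ ε > 0, ∀ x, ε * ‖x‖ ≤ ‖T x‖ := by
  obtain ⟨S, hS⟩ := hT
  refine ⟨(‖S‖ + 1)⁻¹, by positivity, fun x => ?_⟩
  rw [inv_mul_le_iff₀ (by positivity)]
  calc ‖x‖ = ‖S (T x)‖ := by
        rw [← ContinuousLinearMap.comp_apply, hS, ContinuousLinearMap.id_apply]
    _ ≤ ‖S‖ * ‖T x‖ := S.le_opNorm _
    _ ≤ (‖S‖ + 1) * ‖T x‖ := by gcongr; linarith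

lemma IsCompact.exists_pos_le_one_forall_of_locally {X : Type*} [TopologicalSpace X]
    {s : Set X} (hs : IsCompact s) {Q : X → ℝ → Prop} (hQ : ∀ x, Antitone (Q x))
    (hloc : ∀ x ∈ s, ∃ t ∈ 𝓝[s] x, ∃ ε > 0, ∀ y ∈ t, Q y ε) :
    ∃ ε, 0 < ε ∧ ε ≤ 1 ∧ ∀ y ∈ s, Q y ε := by
  refine hs.induction_on (p := fun t => ∃ ε, 0 < ε ∧ ε ≤ 1 ∧ ∀ y ∈ t, Q y ε)
    ⟨1, one_pos, le_rfl, by simp⟩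
    (fun t u htu ⟨ε, hε, hε1, hu⟩ => ⟨ε, hε, hε1, fun y hy => hu y (htu hy)⟩)
    (fun t u ⟨ε, hε, hε1, ht⟩ ⟨ε', hε', _, hu⟩ =>
      ⟨min ε ε', lt_min hε hε', min_le_of_left_le hε1, ?_⟩) ?_
  · rintro y (hy | hy)
    · exact hQ y (min_le_left _ _) (ht y hy)
    · exact hQ y (min_le_right _ _) (hu y hy)
  · intro x hx
    obtain ⟨t, ht, ε, hε, hQt⟩ := hloc x hx
    exact ⟨t, ht, min ε 1, lt_min hε one_pos, min_le_right _ _,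
      fun y hy => hQ y (min_le_left _ _) (hQt y hy)⟩

section Compression

variable {𝕜 E : Type*} [RCLike 𝕜] [NormedAddCommGroup E] [InnerProductSpace 𝕜 E]

lemma mul_norm_le_norm_starProjection_apply_of_lowerBound {K L : Submodule 𝕜 E}
    [K.HasOrthogonalProjection] [L.HasOrthogonalProjection] (A : E →L[𝕜] E) {ε : ℝ}
    (hε : 0 ≤ ε) (hK : ∀ g ∈ K, ε * ‖g‖ ≤ ‖K.starProjection (A g)‖) {f : E} (hf : f ∈ L) :
    (ε - ‖K.starProjection - L.starProjection‖ * (ε + 2 * ‖A‖)) * ‖f‖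
      ≤ ‖L.starProjection (A f)‖ := by
  set δ := ‖K.starProjection - L.starProjection‖
  set g := K.starProjection f
  -- `g = P_K f` is a vector of `K` that is `δ‖f‖`-close to `f = P_L f`
  have hgf : ‖g - f‖ ≤ δ * ‖f‖ := by
    have := (K.starProjection - L.starProjection).le_opNorm f
    rwa [sub_apply, Submodule.starProjection_eq_self_iff.mpr hf] at this
  have hAgf : ‖K.starProjection (A g) - L.starProjection (A f)‖ ≤ 2 * δ * ‖A‖ * ‖f‖ := by
    have h₁ : ‖K.starProjection (A g) - K.starProjection (A f)‖ ≤ ‖A‖ * (δ * ‖f‖) := by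
      rw [← map_sub, ← map_sub]
      exact (K.norm_starProjection_apply_le _).trans ((A.le_opNorm _).trans (by gcongr))
    have h₂ : ‖K.starProjection (A f) - L.starProjection (A f)‖ ≤ δ * (‖A‖ * ‖f‖) :=
      ((K.starProjection - L.starProjection).le_opNorm _).trans (by gcongr; exact A.le_opNorm f)
    calc _ ≤ _ := norm_sub_le_norm_sub_add_norm_sub _ (K.starProjection (A f)) _
      _ ≤ _ := add_le_add h₁ h₂
      _ = _ := by ring
  have hg : ‖f‖ - δ * ‖f‖ ≤ ‖g‖ := by linarith [norm_le_norm_add_norm_sub' f g, norm_sub_rev g f]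
  calc (ε - δ * (ε + 2 * ‖A‖)) * ‖f‖ = ε * (‖f‖ - δ * ‖f‖) - 2 * δ * ‖A‖ * ‖f‖ := by ring
    _ ≤ ‖K.starProjection (A g)‖ - ‖K.starProjection (A g) - L.starProjection (A f)‖ :=
      sub_le_sub ((mul_le_mul_of_nonneg_left hg hε).trans (hK g (K.starProjection_apply_mem f)))
        hAgf
    _ ≤ ‖L.starProjection (A f)‖ := sub_le_iff_le_add.mpr (norm_le_norm_add_norm_sub' _ _)

end Compression

lemma isCompact_B2 : IsCompact B2 := by
  refine Metric.isCompact_of_isClosed_isBounded ?_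
    ((Metric.isBounded_closedBall (x := 0) (r := 1)).subset ?_)
  · exact isClosed_eq (by fun_prop) continuous_const
  · intro α (hα : ‖α.1‖ ^ 2 + ‖α.2‖ ^ 2 = 1)
    rw [mem_closedBall_zero_iff, Prod.norm_def, max_le_iff]
    constructor <;> nlinarith [norm_nonneg α.1, norm_nonneg α.2]

lemma hat2_fourierLp (m n : ℤ) : hat2 (fourierLp 2 m) n = if n = m then 1 else 0 := by
  classical
  rw [hat2, ← congrFun coe_fourierBasis m, fourierBasis.repr_self, lp.single_apply,
    Pi.single_apply]

@[simp] lemma hat2_sub (f g : Lp ℂ 2 hm) (n : ℤ) : hat2 (f - g) n = hat2 f n - hat2 g n := by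
  simp [hat2, map_sub]

/-- `a + b z`, for `α = (a, b)`; when `α ∈ 𝔹²` it is a unit vector spanning `H²_α ⊖ z²H²`. -/
def unitVecA (α : ℂ × ℂ) : Lp ℂ 2 hm := α.1 • fourierLp 2 0 + α.2 • fourierLp 2 1

lemma hat2_unitVecA_zero (α : ℂ × ℂ) : hat2 (unitVecA α) 0 = α.1 := by
  simp [unitVecA, hat2_fourierLp]

lemma hat2_unitVecA_one (α : ℂ × ℂ) : hat2 (unitVecA α) 1 = α.2 := by
  simp [unitVecA, hat2_fourierLp]

lemma inner_unitVecA (α : ℂ × ℂ) (f : Lp ℂ 2 hm) :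
    ⟪unitVecA α, f⟫_ℂ = conj α.1 * hat2 f 0 + conj α.2 * hat2 f 1 := by
  simp [unitVecA, inner_add_left, inner_smul_left, hat2_eq_inner]

lemma conj_mul_add_conj_mul_of_mem_B2 {α : ℂ × ℂ} (hα : α ∈ B2) :
    conj α.1 * α.1 + conj α.2 * α.2 = 1 := by
  simp only [mul_comm (conj _), mul_conj, normSq_eq_norm_sq]
  exact_mod_cast hα

lemma inner_unitVecA_self {α : ℂ × ℂ} (hα : α ∈ B2) : ⟪unitVecA α, unitVecA α⟫_ℂ = 1 := by
  rw [inner_unitVecA, hat2_unitVecA_zero, hat2_unitVecA_one, conj_mul_add_conj_mul_of_mem_B2 hα]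

lemma inner_unitVecA_eq_zero_of_mem_Hardy20 (α : ℂ × ℂ) {f : Lp ℂ 2 hm} (hf : f ∈ Hardy20) :
    ⟪unitVecA α, f⟫_ℂ = 0 := by
  rw [inner_unitVecA, hf 0 (by norm_num), hf 1 (by norm_num)]
  ring

lemma unitVecA_mem_HardyA (α : ℂ × ℂ) : unitVecA α ∈ HardyA α := by
  refine ⟨fun n hn => ?_, by rw [hat2_unitVecA_zero, hat2_unitVecA_one, mul_comm]⟩
  simp [unitVecA, hat2_fourierLp, hn.ne, (hn.trans one_pos).ne]

lemma Hardy20_le_HardyA (α : ℂ × ℂ) : Hardy20 ≤ HardyA α := fun f hf =>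
  ⟨fun n hn => hf n (by omega),
    by rw [hf 0 (by norm_num), hf 1 (by norm_num), mul_zero, mul_zero]⟩

lemma sub_inner_unitVecA_smul_mem_Hardy20 {α : ℂ × ℂ} (hα : α ∈ B2) {f : Lp ℂ 2 hm}
    (hf : f ∈ HardyA α) : f - ⟪unitVecA α, f⟫_ℂ • unitVecA α ∈ Hardy20 := by
  have hab := conj_mul_add_conj_mul_of_mem_B2 hα
  intro n hn
  rw [hat2_sub, hat2_smul, inner_unitVecA]
  obtain hneg | rfl | rfl : n < 0 ∨ n = 0 ∨ n = 1 := by omega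
  · simp [hf.1 n hneg, unitVecA, hat2_fourierLp, hneg.ne, (hneg.trans one_pos).ne]
  · rw [hat2_unitVecA_zero]
    linear_combination (-hat2 f 0) * hab + conj α.2 * hf.2
  · rw [hat2_unitVecA_one]
    linear_combination (-hat2 f 1) * hab - conj α.1 * hf.2

lemma projA_eq_starProjection_add_rankOne {α : ℂ × ℂ} (hα : α ∈ B2) :
    projA α = Hardy20.starProjection + rankOne ℂ (unitVecA α) (unitVecA α) := by
  ext1 x
  set Q := Hardy20.starProjection
  have hQx : Q x ∈ Hardy20 := Hardy20.starProjection_apply_mem x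
  have hperp : ∀ g ∈ Hardy20, ⟪x - (Q x + ⟪unitVecA α, x⟫_ℂ • unitVecA α), g⟫_ℂ = 0 :=
    fun g hg => by
      rw [sub_add_eq_sub_sub, inner_sub_left, Submodule.starProjection_inner_eq_zero x g hg,
        inner_smul_left, inner_unitVecA_eq_zero_of_mem_Hardy20 α hg, mul_zero, sub_zero]
  have hperp_u : ⟪x - (Q x + ⟪unitVecA α, x⟫_ℂ • unitVecA α), unitVecA α⟫_ℂ = 0 := by
    rw [sub_add_eq_sub_sub, inner_sub_left, inner_sub_left, inner_smul_left,
      inner_unitVecA_self hα, inner_eq_zero_symm.mp (inner_unitVecA_eq_zero_of_mem_Hardy20 α hQx),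
      inner_conj_symm]
    ring
  rw [add_apply, rankOne_apply]
  refine Submodule.eq_starProjection_of_mem_of_inner_eq_zero
    ((HardyA α).add_mem (Hardy20_le_HardyA α hQx) ((HardyA α).smul_mem _ (unitVecA_mem_HardyA α)))
    fun w hw => ?_
  rw [← sub_add_cancel w (⟪unitVecA α, w⟫_ℂ • unitVecA α), inner_add_right, inner_smul_right,
    hperp _ (sub_inner_unitVecA_smul_mem_Hardy20 hα hw), hperp_u, mul_zero, add_zero]

lemma continuousOn_projA : ContinuousOn projA B2 := by
  have hu : Continuous unitVecA := by unfold unitVecA; fun_prop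
  have hQu : Continuous fun α => Hardy20.starProjection + rankOne ℂ (unitVecA α) (unitVecA α) :=
    continuous_const.add <| by
      simpa only [Function.comp_apply, ContinuousLinearMap.flip_apply] using
        ((rankOne ℂ).flip.continuous.comp hu).clm_apply hu
  exact hQu.continuousOn.congr fun α hα => projA_eq_starProjection_add_rankOne hα

/-- If `T^α_φ` is left invertible for every `α ∈ 𝔹²`, then the lower bounds can be chosen
uniformly: there is `ε ∈ (0,1]` with `‖T^α_φ f‖ ≥ ε‖f‖` for all `α ∈ 𝔹²`, `f ∈ H²_α`. -/
theorem uniform_lower_bound_toeplitz (φ : Lp ℂ ∞ hm)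
    (h : ∀ α ∈ B2, LeftInvertible (Toeplitz α φ)) :
    ∃ ε : ℝ, 0 < ε ∧ ε ≤ 1 ∧
      ∀ α ∈ B2, ∀ f : HardyA α, ε * ‖f‖ ≤ ‖Toeplitz α φ f‖ := by
  refine isCompact_B2.exists_pos_le_one_forall_of_locally
    (Q := fun α ε => ∀ f : HardyA α, ε * ‖f‖ ≤ ‖Toeplitz α φ f‖)
    (fun α ε' ε hle hε f => (mul_le_mul_of_nonneg_right hle (norm_nonneg _)).trans (hε f)) ?_
  intro α hα
  obtain ⟨ε, hε, hlow⟩ := (h α hα).exists_pos_mul_norm_le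
  set c := ε + 2 * ‖mul2 φ‖
  have hnear : ∀ᶠ β in 𝓝[B2] α, ‖projA α - projA β‖ * c < ε / 2 := by
    have hlim : Tendsto (fun β => ‖projA α - projA β‖ * c) (𝓝[B2] α) (𝓝 0) := by
      simpa using (((continuousOn_projA α hα).const_sub (projA α)).norm).mul_const c
    exact hlim.eventually (gt_mem_nhds (half_pos hε))
  refine ⟨_, hnear, ε / 2, half_pos hε, fun β hβ f => ?_⟩
  have hβlow : (ε - ‖projA α - projA β‖ * c) * ‖f‖ ≤ ‖Toeplitz β φ f‖ :=
    mul_norm_le_norm_starProjection_apply_of_lowerBound (mul2 φ) hε.le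
      (fun g hg => hlow ⟨g, hg⟩) f.2
  have hβ : ‖projA α - projA β‖ * c < ε / 2 := hβ
  exact (mul_le_mul_of_nonneg_right (by linarith) (norm_nonneg _)).trans hβlow

end
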